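/- arXiv:1801.03422 — 3 statements merged into one kernel-verified Lean document; each statement's English description precedes it below -/
import Mathlib

section
/- Let p ∈ (0,1], C ≥ 0, and integer X̄ ≥ 1. With the stationary distribution π_i = 1/(X̄ + (1-p)/p) for 1 ≤ i ≤ X̄ and π_i = (1-p)^{i-X̄}/(X̄ + (1-p)/p) for i > X̄, the average cost (1+C)π_1 + ∑_{i=2}^∞ i·π_i equals (X̄²/2 + (1/p − 1/2)·X̄ + 1/p² − 1/p + C) / (X̄ + (1-p)/p). -/
lemma aux_sum_range (n : ℕ) :
    ∑ i ∈ Finset.range n, ((i : ℝ) + 2) = n * (n + 3) / 2 := by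
  induction n with
  | zero => simp
  | succ n ih =>
    rw [Finset.sum_range_succ, ih]
    push_cast
    ring

theorem threshold_average_cost (p : ℝ) (hp : 0 < p) (hp1 : p ≤ 1)
    (C : ℝ) (hC : 0 ≤ C) (X : ℕ) (hX : 1 ≤ X)
    (π : ℕ → ℝ)
    (hπ : ∀ i : ℕ, 1 ≤ i →
      π i = if i ≤ X then 1 / ((X : ℝ) + (1 - p) / p)
            else (1 - p) ^ (i - X) / ((X : ℝ) + (1 - p) / p)) :
    (1 + C) * π 1 + ∑' i : ℕ, ((i + 2 : ℕ) : ℝ) * π (i + 2)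
      = ((X : ℝ) ^ 2 / 2 + (1 / p - 1 / 2) * X + 1 / p ^ 2 - 1 / p + C)
        / ((X : ℝ) + (1 - p) / p) := by
  set q : ℝ := 1 - p with hqdef
  set D : ℝ := (X : ℝ) + q / p with hDdef
  have hq0 : 0 ≤ q := by simp [hqdef]; linarith
  have hq1 : q < 1 := by simp [hqdef]; linarith
  have hqnorm : ‖q‖ < 1 := by
    rw [Real.norm_eq_abs, abs_of_nonneg hq0]; exact hq1
  have hX1 : (1 : ℝ) ≤ (X : ℝ) := by exact_mod_cast hX
  have hD : 0 < D := by
    have : (0:ℝ) ≤ q / p := div_nonneg hq0 hp.le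
    simp only [hDdef]; linarith
  have hDne : D ≠ 0 := ne_of_gt hD
  have hpne : p ≠ 0 := ne_of_gt hp
  set F : ℕ → ℝ := fun i => ((i + 2 : ℕ) : ℝ) * π (i + 2) with hF
  have hF_tail : ∀ i : ℕ,
      F (i + (X - 1)) = (q / D) * ((i : ℝ) * q ^ i)
        + (((X : ℝ) + 1) * q / D) * q ^ i := by
    intro i
    have h1 : i + (X - 1) + 2 = i + X + 1 := by omega
    have h2 : ¬ (i + X + 1 ≤ X) := by omega
    have h3 : (i + X + 1) - X = i + 1 := by omega
    show ((i + (X - 1) + 2 : ℕ) : ℝ) * π (i + (X - 1) + 2) = _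
    rw [h1, hπ (i + X + 1) (by omega), if_neg h2, h3]
    push_cast
    ring
  have hsum1 : Summable (fun i : ℕ => (i : ℝ) * q ^ i) := by
    simpa using summable_pow_mul_geometric_of_norm_lt_one 1 hqnorm
  have hsum2 : Summable (fun i : ℕ => q ^ i) :=
    summable_geometric_of_lt_one hq0 hq1
  have hsum_tail : Summable (fun i : ℕ => F (i + (X - 1))) := by
    apply Summable.congr _ (fun i => (hF_tail i).symm)
    exact (hsum1.mul_left _).add (hsum2.mul_left _)
  have hsumF : Summable F := (summable_nat_add_iff (X - 1)).mp hsum_tail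
  have key := Summable.sum_add_tsum_nat_add (f := F) (X - 1) hsumF
  have hhead : ∑ i ∈ Finset.range (X - 1), F i
      = (((X : ℝ) - 1) * ((X : ℝ) + 2) / 2) / D := by
    have : ∀ i ∈ Finset.range (X - 1), F i = ((i : ℝ) + 2) / D := by
      intro i hi
      have hi' : i < X - 1 := Finset.mem_range.mp hi
      have hle : i + 2 ≤ X := by omega
      show ((i + 2 : ℕ) : ℝ) * π (i + 2) = _
      rw [hπ (i + 2) (by omega), if_pos hle]
      push_cast
      ring
    rw [Finset.sum_congr rfl this, ← Finset.sum_div, aux_sum_range]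
    have hcast : ((X - 1 : ℕ) : ℝ) = (X : ℝ) - 1 := by
      push_cast [Nat.cast_sub hX]; ring
    rw [hcast]
    ring_nf
  have htail : ∑' i : ℕ, F (i + (X - 1))
      = (q / D) * (q / (1 - q) ^ 2) + (((X : ℝ) + 1) * q / D) * (1 / (1 - q)) := by
    rw [tsum_congr hF_tail,
      Summable.tsum_add (hsum1.mul_left _) (hsum2.mul_left _),
      tsum_mul_left, tsum_mul_left,
      tsum_coe_mul_geometric_of_norm_lt_one hqnorm,
      tsum_geometric_of_lt_one hq0 hq1]
    ring
  have hπ1 : π 1 = 1 / D := by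
    rw [hπ 1 le_rfl, if_pos hX]
  have hq' : (1 : ℝ) - q = p := by simp [hqdef]
  rw [hπ1, ← key, hhead, htail, hq']
  have hqp : q = 1 - p := hqdef
  rw [hqp]
  field_simp
  ring
end

section
/- Let p ∈ (0,1] and define I(x) = x²/2 − x/2 + x/p for integers x ≥ 0 (with I(0) = 0), and 𝒞(X̄; C) as the average cost of threshold X̄. If I(x−1) ≤ C < I(x) for a positive integer x, then X̄ = x minimizes 𝒞(X̄; C) over all positive integers X̄. -/
noncomputable def avgCost (p C : ℝ) (X : ℕ) : ℝ :=
  ((X : ℝ) ^ 2 / 2 + (1 / p - 1 / 2) * X + 1 / p ^ 2 - 1 / p + C) / ((X : ℝ) + (1 - p) / p)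

noncomputable def whittleIndex (p : ℝ) (x : ℕ) : ℝ :=
  (x : ℝ) ^ 2 / 2 - (x : ℝ) / 2 + (x : ℝ) / p

lemma den_pos (p : ℝ) (hp : 0 < p) (hp1 : p ≤ 1) (X : ℕ) (hX : 1 ≤ X) :
    0 < (X : ℝ) + (1 - p) / p := by
  have h : (0:ℝ) ≤ (1 - p) / p := div_nonneg (by linarith) hp.le
  have h2 : (1:ℝ) ≤ (X : ℝ) := by exact_mod_cast hX
  linarith

lemma step_diff (p : ℝ) (hp : 0 < p) (hp1 : p ≤ 1) (C : ℝ) (X : ℕ) (hX : 1 ≤ X) :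
    avgCost p C (X + 1) - avgCost p C X =
      (whittleIndex p X - C) / (((X : ℝ) + (1 - p) / p) * (((X : ℝ) + 1) + (1 - p) / p)) := by
  have hp' : p ≠ 0 := hp.ne'
  have h1 : ((X : ℝ) + (1 - p) / p) ≠ 0 := ne_of_gt (den_pos p hp hp1 X hX)
  have h2 : (((X : ℝ) + 1) + (1 - p) / p) ≠ 0 := by
    have := den_pos p hp hp1 (X + 1) (by omega)
    push_cast at this ⊢
    linarith
  have hA : (X : ℝ) * p + 1 - p ≠ 0 := by
    have := den_pos p hp hp1 X hX
    intro h
    apply ne_of_gt this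
    field_simp
    linarith
  have hB : ((X : ℝ) + 1) * p + 1 - p ≠ 0 := by
    have := den_pos p hp hp1 (X + 1) (by omega)
    push_cast at this
    intro h
    apply ne_of_gt this
    field_simp
    linarith
  unfold avgCost whittleIndex
  push_cast
  rw [show (X : ℝ) + (1 - p) / p = ((X : ℝ) * p + 1 - p) / p from by field_simp; ring,
      show (X : ℝ) + 1 + (1 - p) / p = (((X : ℝ) + 1) * p + 1 - p) / p from by field_simp; ring]
  field_simp
  ring

lemma wI_mono (p : ℝ) (hp : 0 < p) {a b : ℕ} (hab : a ≤ b) :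
    whittleIndex p a ≤ whittleIndex p b := by
  induction b with
  | zero => simp_all
  | succ n ih =>
    rcases Nat.lt_or_ge a (n + 1) with h | h
    · have hle := ih (by omega)
      have hstep : whittleIndex p n ≤ whittleIndex p (n + 1) := by
        unfold whittleIndex
        have hn : (0:ℝ) ≤ (n : ℝ) := Nat.cast_nonneg n
        have hpinv : (0:ℝ) < 1 / p := by positivity
        push_cast
        rw [show ((n : ℝ) + 1) / p = (n : ℝ) / p + 1 / p from add_div _ _ _]
        nlinarith
      linarith
    · have : a = n + 1 := le_antisymm hab h
      simp [this]

theorem optimal_threshold (p : ℝ) (hp : 0 < p) (hp1 : p ≤ 1)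
    (C : ℝ) (hC : 0 ≤ C) (x : ℕ) (hx : 1 ≤ x)
    (h1 : whittleIndex p (x - 1) ≤ C) (h2 : C < whittleIndex p x) :
    ∀ X : ℕ, 1 ≤ X → avgCost p C x ≤ avgCost p C X := by
  -- increasing for X ≥ x
  have up : ∀ Y, x ≤ Y → avgCost p C x ≤ avgCost p C Y := by
    intro Y hY
    induction Y, hY using Nat.le_induction with
    | base => exact le_refl _
    | succ n hn ih =>
      have hn1 : 1 ≤ n := le_trans hx hn
      have hd := step_diff p hp hp1 C n hn1
      have hCn : C ≤ whittleIndex p n := le_trans h2.le (wI_mono p hp hn)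
      have hpos : 0 < ((n : ℝ) + (1 - p) / p) * (((n : ℝ) + 1) + (1 - p) / p) := by
        have a := den_pos p hp hp1 n hn1
        have b := den_pos p hp hp1 (n + 1) (by omega)
        push_cast at b
        nlinarith
      have : 0 ≤ avgCost p C (n + 1) - avgCost p C n := by
        rw [hd]
        apply div_nonneg (by linarith) hpos.le
      linarith
  -- decreasing for X ≤ x
  have down : ∀ k, 1 ≤ x - k → avgCost p C x ≤ avgCost p C (x - k) := by
    intro k
    induction k with
    | zero => simp
    | succ m ih =>
      intro hm
      have hm' : 1 ≤ x - m := by omega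
      have hY : x - (m + 1) + 1 = x - m := by omega
      have hd := step_diff p hp hp1 C (x - (m + 1)) hm
      rw [hY] at hd
      have hle : whittleIndex p (x - (m + 1)) ≤ C :=
        le_trans (wI_mono p hp (by omega : x - (m + 1) ≤ x - 1)) h1
      have hpos : 0 < ((x - (m + 1) : ℕ) + (1 - p) / p) *
          (((x - (m + 1) : ℕ) + 1 : ℝ) + (1 - p) / p) := by
        have a := den_pos p hp hp1 (x - (m + 1)) hm
        have b := den_pos p hp hp1 (x - (m + 1) + 1) (by omega)
        push_cast at b
        nlinarith
      have hstep : avgCost p C (x - m) - avgCost p C (x - (m + 1)) ≤ 0 := by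
        rw [hd]
        apply div_nonpos_of_nonpos_of_nonneg (by linarith) hpos.le
      have := ih hm'
      linarith
  intro X hX
  rcases le_or_gt x X with h | h
  · exact up X h
  · have : X = x - (x - X) := by omega
    rw [this]
    exact down (x - X) (by omega)
end

section
/- For the two-state action comparison in the discounted subproblem: if J_α(x, λ) is nondecreasing in x for each fixed λ ∈ {0,1} and 0 < α < 1, and if for state (x,1) updating is weakly preferred (1 + C + α·E[J_α(1, λ')] ≤ x + 1 + α·E[J_α(x+1, λ')]), then updating is weakly preferred at state (x+1, 1) as well. -/
theorem update_preference_propagates (p : ℝ) (hp : 0 < p) (hp1 : p ≤ 1)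
    (α C : ℝ) (hα0 : 0 < α) (hα1 : α < 1) (hC : 0 ≤ C)
    (J : ℝ → ℝ → ℝ)
    (hmono0 : Monotone (fun y => J y 0))
    (hmono1 : Monotone (fun y => J y 1))
    (x : ℝ) (hx : 1 ≤ x)
    (hupd : 1 + C + α * (p * J 1 1 + (1 - p) * J 1 0)
      ≤ x + 1 + α * (p * J (x + 1) 1 + (1 - p) * J (x + 1) 0)) :
    1 + C + α * (p * J 1 1 + (1 - p) * J 1 0)
      ≤ (x + 1) + 1 + α * (p * J (x + 2) 1 + (1 - p) * J (x + 2) 0) := by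
  refine hupd.trans ?_
  have h1 : J (x + 1) 1 ≤ J (x + 2) 1 := hmono1 (by linarith)
  have h0 : J (x + 1) 0 ≤ J (x + 2) 0 := hmono0 (by linarith)
  have : p * J (x + 1) 1 + (1 - p) * J (x + 1) 0
      ≤ p * J (x + 2) 1 + (1 - p) * J (x + 2) 0 := by
    have := mul_le_mul_of_nonneg_left h1 hp.le
    have := mul_le_mul_of_nonneg_left h0 (by linarith : (0:ℝ) ≤ 1 - p)
    linarith
  nlinarith
end
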